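/- arXiv:2506.23047 — 2 statements merged into one kernel-verified Lean document; each statement's English description precedes it below -/
import Mathlib

section
/- Let n ≥ 2 be an integer and let G be a graph in which every vertex lies on a cycle whose length divides n (equivalently, every connected component of G is a cycle of length dividing n). Then the graph semiring S_G satisfies the identity p_n ≈ c_n. -/
universe u

-- The underlying set of the graph semiring of a graph with vertex set `V`:
-- the vertices together with two extra elements `0` and `ω`.
inductive GS (V : Type u) : Type u where
  | zero : GS V
  | omega : GS V
  | vert : V → GS V

-- Multiplication of the graph semiring: `x·y = ω` if `x, y` are vertices joined by an
-- edge, and `x·y = 0` otherwise.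
open Classical in
noncomputable def gsMul {V : Type u} (E : V → V → Prop) : GS V → GS V → GS V
  | GS.vert a, GS.vert b => if E a b then GS.omega else GS.zero
  | _, _ => GS.zero

-- The flat addition of the graph semiring: `a + b = a` if `a = b`, else `0`.
open Classical in
noncomputable def gsAdd {V : Type u} (a b : GS V) : GS V :=
  if a = b then a else GS.zero

-- `gsSum f n = f 0 + f 1 + ⋯ + f n` (a sum of `n + 1` terms).
noncomputable def gsSum {V : Type u} (f : ℕ → GS V) : ℕ → GS V
  | 0 => f 0
  | n + 1 => gsAdd (gsSum f n) (f (n + 1))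

-- `E` is a graph (in the sense of the paper): a directed graph with no isolated
-- vertices in which every vertex has out-degree at most 1 and in-degree at most 1.
def IsGraph {V : Type u} (E : V → V → Prop) : Prop :=
  (∀ v : V, ∃ u : V, E v u ∨ E u v) ∧
  (∀ v a b : V, E v a → E v b → a = b) ∧
  (∀ v a b : V, E a v → E b v → a = b)

-- `v 0, v 1, …, v (m - 1)` is a path of the graph `E` with `m` vertices.
def IsPathOn {V : Type u} (E : V → V → Prop) (m : ℕ) (v : ℕ → V) : Prop :=
  (∀ i < m, ∀ j < m, v i = v j → i = j) ∧
  (∀ i : ℕ, i + 1 < m → E (v i) (v (i + 1)))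

-- `v 0, v 1, …, v (m - 1)` is a cycle of the graph `E` of length `m`.
def IsCycleOn {V : Type u} (E : V → V → Prop) (m : ℕ) (v : ℕ → V) : Prop :=
  1 ≤ m ∧
  (∀ i < m, ∀ j < m, v i = v j → i = j) ∧
  (∀ i : ℕ, i + 1 < m → E (v i) (v (i + 1))) ∧
  E (v (m - 1)) (v 0)

-- The value of the term `p_n(x_1, …, x_n) = x_1x_2 + x_2x_3 + ⋯ + x_{n-1}x_n` in the
-- graph semiring, under the assignment `x_{i+1} ↦ g i` (for `n ≥ 2`).
noncomputable def pTerm {V : Type u} (E : V → V → Prop) (g : ℕ → GS V) (n : ℕ) : GS V :=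
  gsSum (fun i => gsMul E (g i) (g (i + 1))) (n - 2)

-- The graph semiring of `E` satisfies the identity `p_n ≈ c_n`, i.e. for all
-- `x_1, …, x_n`: `x_1x_2 + ⋯ + x_{n-1}x_n = x_1x_2 + ⋯ + x_{n-1}x_n + x_nx_1`.
def satPC {V : Type u} (E : V → V → Prop) (n : ℕ) : Prop :=
  ∀ g : ℕ → GS V,
    pTerm E g n = gsAdd (pTerm E g n) (gsMul E (g (n - 1)) (g 0))

section Aux

variable {V : Type u}

lemma gsAdd_zero_left (b : GS V) : gsAdd GS.zero b = GS.zero := by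
  unfold gsAdd; split <;> rfl

lemma gsAdd_self (a : GS V) : gsAdd a a = a := by
  unfold gsAdd; simp

lemma gsSum_cases (f : ℕ → GS V) (k : ℕ) :
    gsSum f k = GS.zero ∨ ∀ i ≤ k, f i = gsSum f k := by
  induction k with
  | zero =>
    right; intro i hi
    interval_cases i
    rfl
  | succ k ih =>
    rcases ih with h | h
    · left
      show gsAdd (gsSum f k) (f (k + 1)) = GS.zero
      rw [h, gsAdd_zero_left]
    · by_cases he : gsSum f k = f (k + 1)
      · right
        have hs : gsSum f (k + 1) = gsSum f k := by
          show gsAdd (gsSum f k) (f (k + 1)) = gsSum f k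
          rw [← he, gsAdd_self]
        intro i hi
        rcases Nat.lt_or_ge i (k + 1) with h1 | h1
        · rw [hs]; exact h i (by omega)
        · have hik : i = k + 1 := by omega
          rw [hik, hs, he]
      · left
        show gsAdd (gsSum f k) (f (k + 1)) = GS.zero
        unfold gsAdd
        rw [if_neg he]

lemma gsMul_cases (E : V → V → Prop) (a b : GS V) :
    gsMul E a b = GS.zero ∨ gsMul E a b = GS.omega := by
  cases a <;> cases b <;> simp [gsMul]
  exact (em _).symm

lemma gsMul_eq_omega (E : V → V → Prop) (a b : GS V) :
    gsMul E a b = GS.omega ↔ ∃ x y, a = GS.vert x ∧ b = GS.vert y ∧ E x y := by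
  cases a <;> cases b <;> simp [gsMul]

lemma key_lemma (E : V → V → Prop) (hG : IsGraph E) (n : ℕ) (hn : 2 ≤ n)
    (m : ℕ) (v : ℕ → V) (hc : IsCycleOn E m v) (hdvd : m ∣ n)
    (i0 : ℕ) (hi0 : i0 < m) (u : ℕ → V) (hv0 : v i0 = u 0)
    (hu : ∀ i, i + 1 < n → E (u i) (u (i + 1))) :
    E (u (n - 1)) (u 0) := by
  obtain ⟨hm, hinj, hedge, hwrap⟩ := hc
  have hedge' : ∀ j : ℕ, E (v (j % m)) (v ((j + 1) % m)) := by
    intro j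
    have hjm : j % m < m := Nat.mod_lt _ (by omega)
    by_cases hj : j % m = m - 1
    · have h1 : (j + 1) % m = 0 := by
        rw [Nat.add_mod, hj]
        rcases Nat.eq_or_lt_of_le hm with h | h
        · simp [← h]
        · rw [Nat.mod_eq_of_lt h]
          have hmm : m - 1 + 1 = m := by omega
          rw [hmm, Nat.mod_self]
      rw [hj, h1]
      exact hwrap
    · have hlt : j % m + 1 < m := by omega
      have h1 : (j + 1) % m = j % m + 1 := by
        have hm2 : 1 < m := by omega
        rw [Nat.add_mod, Nat.mod_eq_of_lt hm2, Nat.mod_eq_of_lt hlt]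
      rw [h1]
      exact hedge _ hlt
  have hwalk : ∀ i, i < n → u i = v ((i0 + i) % m) := by
    intro i
    induction i with
    | zero =>
      intro _
      simpa [Nat.mod_eq_of_lt hi0] using hv0.symm
    | succ i ih =>
      intro hin
      have h1 : u i = v ((i0 + i) % m) := ih (by omega)
      have h2 : E (u i) (u (i + 1)) := hu i hin
      have h3 : E (v ((i0 + i) % m)) (v ((i0 + i + 1) % m)) := hedge' (i0 + i)
      rw [← h1] at h3
      have h4 := hG.2.1 (u i) _ _ h2 h3
      rw [h4]
      congr 1
  have hn1 : u (n - 1) = v ((i0 + (n - 1)) % m) := hwalk (n - 1) (by omega)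
  have h4 : E (v ((i0 + (n - 1)) % m)) (v ((i0 + (n - 1) + 1) % m)) := hedge' _
  have h5 : i0 + (n - 1) + 1 = i0 + n := by omega
  have h6 : (i0 + n) % m = i0 := by
    obtain ⟨k, hk⟩ := hdvd
    rw [hk, Nat.add_mul_mod_self_left, Nat.mod_eq_of_lt hi0]
  rw [h5, h6, hv0] at h4
  rw [hn1]
  exact h4

end Aux

/-- For `n ≥ 2`, if every vertex of a graph `E` lies on a cycle whose
length divides `n`, then the graph semiring of `E` satisfies `p_n ≈ c_n`. -/
theorem stmt_12 {V : Type u} (E : V → V → Prop) (hG : IsGraph E)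
    (n : ℕ) (hn : 2 ≤ n)
    (hcyc : ∀ u : V, ∃ (m : ℕ) (v : ℕ → V),
      IsCycleOn E m v ∧ m ∣ n ∧ ∃ i < m, v i = u) :
    satPC E n := by
  intro g
  set f : ℕ → GS V := fun i => gsMul E (g i) (g (i + 1)) with hf
  have hpt : pTerm E g n = gsSum f (n - 2) := rfl
  have hzero_case : pTerm E g n = GS.zero →
      pTerm E g n = gsAdd (pTerm E g n) (gsMul E (g (n - 1)) (g 0)) := by
    intro h
    rw [h, gsAdd_zero_left]
  rcases gsSum_cases f (n - 2) with h | h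
  · exact hzero_case (hpt.trans h)
  · rcases gsMul_cases E (g 0) (g 1) with h0 | h0
    · apply hzero_case
      rw [hpt, ← h 0 (Nat.zero_le _)]
      exact h0
    · -- all the summands are ω
      have hsum : gsSum f (n - 2) = GS.omega := by
        rw [← h 0 (Nat.zero_le _)]; exact h0
      have hterm : ∀ i ≤ n - 2, gsMul E (g i) (g (i + 1)) = GS.omega := by
        intro i hi
        have := h i hi
        rw [hsum] at this
        exact this
      have hex : ∀ i < n, ∃ a, g i = GS.vert a := by
        intro i hi
        by_cases hi' : i + 1 < n
        · obtain ⟨x, y, hx, hy, _⟩ := (gsMul_eq_omega E _ _).1 (hterm i (by omega))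
          exact ⟨x, hx⟩
        · have hieq : i = n - 1 := by omega
          obtain ⟨x, y, hx, hy, _⟩ := (gsMul_eq_omega E _ _).1 (hterm (n - 2) le_rfl)
          have hni : n - 2 + 1 = i := by omega
          rw [hni] at hy
          exact ⟨y, hy⟩
      have hex2 : ∀ i : ℕ, ∃ a, g (min i (n - 1)) = GS.vert a := by
        intro i
        exact hex _ (by omega)
      choose u hu0 using hex2
      have hgv : ∀ i < n, g i = GS.vert (u i) := by
        intro i hi
        have := hu0 i
        rwa [min_eq_left (by omega : i ≤ n - 1)] at this
      have hue : ∀ i, i + 1 < n → E (u i) (u (i + 1)) := by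
        intro i hin
        obtain ⟨x, y, hx, hy, hxy⟩ := (gsMul_eq_omega E _ _).1 (hterm i (by omega))
        have h1 := hgv i (by omega)
        have h2 := hgv (i + 1) hin
        rw [h1] at hx
        rw [h2] at hy
        injection hx with hx'
        injection hy with hy'
        rw [hx', hy']
        exact hxy
      obtain ⟨m, v, hc, hdvd, i0, hi0m, hvi0⟩ := hcyc (u 0)
      have hkey : E (u (n - 1)) (u 0) :=
        key_lemma E hG n hn m v hc hdvd i0 hi0m u hvi0 hue
      have hmul : gsMul E (g (n - 1)) (g 0) = GS.omega := by
        rw [hgv (n - 1) (by omega), hgv 0 (by omega)]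
        simp [gsMul, hkey]
      rw [hmul, hpt, hsum, gsAdd_self]
end

section
/- Let n ≥ 1 be an integer and let G be a graph. The graph semiring S_G satisfies the identity c_n ≈ x³ if and only if G contains no cycle whose length divides n. -/
/-!
In `S_G` every product `x·y` is `0` or `ω`, so `x·x·x = 0` and a flat sum of products is `0`
unless every summand is `ω`. Hence `c_n ≈ x³` fails exactly when some `x_1, …, x_n` have all
cyclically consecutive products equal to `ω`, i.e. when `G` has a closed walk of length `n`.
Since out-degrees are at most one, a closed walk is determined by its start and is periodic
with period the first return time `m`; the first `m` vertices form a cycle and `m ∣ n`.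
Conversely, going `n / m` times around a cycle of length `m` is a closed walk of length `n`.
-/

universe u

-- The graph semiring of `E` satisfies the identity `c_n ≈ x³`: for all
-- `x, x_1, …, x_n` one has `x_1x_2 + x_2x_3 + ⋯ + x_{n-1}x_n + x_nx_1 = x·x·x`.
def satCx3 {V : Type u} (E : V → V → Prop) (n : ℕ) : Prop :=
  ∀ (x : GS V) (g : ℕ → GS V),
    gsSum (fun i => gsMul E (g i) (g ((i + 1) % n))) (n - 1) =
      gsMul E (gsMul E x x) x

open Function

section GraphSemiring

variable {V : Type u} (E : V → V → Prop)

theorem gsMul_eq_omega_iff {a b : GS V} :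
    gsMul E a b = GS.omega ↔ ∃ x y, a = GS.vert x ∧ b = GS.vert y ∧ E x y := by
  cases a <;> cases b <;> simp [gsMul]

theorem gsMul_eq_zero_or_eq_omega (a b : GS V) :
    gsMul E a b = GS.zero ∨ gsMul E a b = GS.omega := by
  unfold gsMul
  split
  · split_ifs
    · exact Or.inr rfl
    · exact Or.inl rfl
  · exact Or.inl rfl

theorem gsMul_gsMul_eq_zero (a b c : GS V) : gsMul E (gsMul E a b) c = GS.zero := by
  rcases gsMul_eq_zero_or_eq_omega E a b with h | h <;> rw [h] <;> cases c <;> rfl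

theorem gsAdd_eq_iff_of_ne_zero {a b c : GS V} (hc : c ≠ GS.zero) :
    gsAdd a b = c ↔ a = c ∧ b = c := by
  unfold gsAdd
  split_ifs with h
  · subst h; tauto
  · exact ⟨fun h' => absurd h'.symm hc, fun ⟨ha, hb⟩ => absurd (ha.trans hb.symm) h⟩

theorem gsSum_eq_iff_of_ne_zero (f : ℕ → GS V) {c : GS V} (hc : c ≠ GS.zero) (k : ℕ) :
    gsSum f k = c ↔ ∀ i ≤ k, f i = c := by
  induction k with
  | zero => simp [gsSum]
  | succ k ih =>
    simp only [gsSum, gsAdd_eq_iff_of_ne_zero hc, ih, Nat.le_succ_iff, or_imp, forall_and,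
      forall_eq]

theorem gsSum_eq_zero_or_eq_first (f : ℕ → GS V) (k : ℕ) :
    gsSum f k = GS.zero ∨ gsSum f k = f 0 := by
  induction k with
  | zero => exact Or.inr rfl
  | succ k ih =>
    simp only [gsSum, gsAdd]
    split_ifs
    · exact ih
    · exact Or.inl rfl

theorem gsSum_eq_zero_or_eq_omega {f : ℕ → GS V}
    (hf : ∀ i, f i = GS.zero ∨ f i = GS.omega) (k : ℕ) :
    gsSum f k = GS.zero ∨ gsSum f k = GS.omega := by
  rcases gsSum_eq_zero_or_eq_first f k with h | h
  · exact Or.inl h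
  · rw [h]
    exact hf 0

theorem satCx3_iff_not_exists_closed_walk {n : ℕ} (hn : 0 < n) :
    satCx3 E n ↔
      ¬ ∃ g : ℕ → GS V, ∀ i < n, gsMul E (g i) (g ((i + 1) % n)) = GS.omega := by
  have hsum : ∀ g : ℕ → GS V,
      gsSum (fun i => gsMul E (g i) (g ((i + 1) % n))) (n - 1) = GS.zero ↔
        ¬ ∀ i < n, gsMul E (g i) (g ((i + 1) % n)) = GS.omega := fun g => by
    simp only [← Nat.le_sub_one_iff_lt hn]
    rw [← gsSum_eq_iff_of_ne_zero _ (c := GS.omega) nofun]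
    rcases gsSum_eq_zero_or_eq_omega
      (fun i => gsMul_eq_zero_or_eq_omega E (g i) (g ((i + 1) % n))) (n - 1) with h | h <;>
      simp [h]
  simp only [satCx3, gsMul_gsMul_eq_zero, hsum, not_exists]
  exact ⟨fun h => h GS.zero, fun h _ => h⟩

theorem exists_closed_walk_iff_exists_periodic_walk {n : ℕ} (hn : 0 < n) :
    (∃ g : ℕ → GS V, ∀ i < n, gsMul E (g i) (g ((i + 1) % n)) = GS.omega) ↔
      ∃ w : ℕ → V, (∀ i, E (w i) (w (i + 1))) ∧ Periodic w n := by
  constructor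
  · rintro ⟨g, hg⟩
    have hvert : ∀ i, ∃ x y, g (i % n) = GS.vert x ∧ g ((i + 1) % n) = GS.vert y ∧ E x y :=
      fun i => by
        rw [← gsMul_eq_omega_iff, ← Nat.mod_add_mod]
        exact hg _ (Nat.mod_lt i hn)
    choose w w' hw hw' hE using hvert
    refine ⟨w, fun i => ?_, fun i => ?_⟩
    · exact GS.vert.inj ((hw' i).symm.trans (hw (i + 1))) ▸ hE i
    · exact GS.vert.inj ((hw (i + n)).symm.trans (by rw [Nat.add_mod_right, hw i]))
  · rintro ⟨w, hw, hper⟩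
    refine ⟨fun i => GS.vert (w i), fun i _ => ?_⟩
    rw [gsMul_eq_omega_iff]
    exact ⟨_, _, rfl, rfl, hper.map_mod_nat (i + 1) ▸ hw i⟩

end GraphSemiring

section FunctionalGraph

variable {V : Type u} {E : V → V → Prop}

theorem IsCycleOn.adj_mod {m : ℕ} {v : ℕ → V} (hv : IsCycleOn E m v) (i : ℕ) :
    E (v (i % m)) (v ((i + 1) % m)) := by
  obtain ⟨hm, -, hpath, hwrap⟩ := hv
  rw [← Nat.mod_add_mod]
  by_cases h : i % m + 1 < m
  · rw [Nat.mod_eq_of_lt h]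
    exact hpath _ h
  · have hlast : i % m + 1 = m := by have := Nat.mod_lt i hm; omega
    rw [hlast, Nat.mod_self, show i % m = m - 1 by omega]
    exact hwrap

theorem walk_add_eq_add_of_eq (hfun : ∀ v a b, E v a → E v b → a = b) {w : ℕ → V}
    (hw : ∀ i, E (w i) (w (i + 1))) {i j : ℕ} (h : w i = w j) (k : ℕ) :
    w (i + k) = w (j + k) := by
  induction k with
  | zero => exact h
  | succ k ih => exact hfun _ _ _ (hw (i + k)) (ih ▸ hw (j + k))

theorem periodic_of_walk_of_eq_zero (hfun : ∀ v a b, E v a → E v b → a = b) {w : ℕ → V}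
    (hw : ∀ i, E (w i) (w (i + 1))) {m : ℕ} (hm : w m = w 0) : Periodic w m := fun i => by
  simpa [add_comm] using walk_add_eq_add_of_eq hfun hw hm i

theorem isCycleOn_of_walk (hfun : ∀ v a b, E v a → E v b → a = b) {w : ℕ → V}
    (hw : ∀ i, E (w i) (w (i + 1))) {m : ℕ} (hm : 0 < m) (hm0 : w m = w 0)
    (hmin : ∀ k, 0 < k → k < m → w k ≠ w 0) : IsCycleOn E m w := by
  refine ⟨hm, fun i hi j hj h => ?_, fun i _ => hw i, ?_⟩
  · by_contra hne
    wlog hij : i < j generalizing i j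
    · exact this j hj i hi h.symm (Ne.symm hne) (by omega)
    -- walking `m - j` further from `w i = w j` returns to `w 0` too early
    refine hmin (i + (m - j)) (by omega) (by omega) ?_
    rw [walk_add_eq_add_of_eq hfun hw h, Nat.add_sub_cancel' hj.le, hm0]
  · simpa [Nat.sub_add_cancel hm, hm0] using hw (m - 1)

theorem exists_isCycleOn_dvd_of_periodic_walk (hfun : ∀ v a b, E v a → E v b → a = b)
    {w : ℕ → V} (hw : ∀ i, E (w i) (w (i + 1))) {n : ℕ} (hn : 0 < n) (hper : Periodic w n) :
    ∃ m v, IsCycleOn E m v ∧ m ∣ n := by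
  classical
  have hwn : w n = w 0 := by simpa using hper 0
  have hex : ∃ k, 0 < k ∧ w k = w 0 := ⟨n, hn, hwn⟩
  set m := Nat.find hex
  obtain ⟨hm, hm0⟩ : 0 < m ∧ w m = w 0 := Nat.find_spec hex
  have hmin : ∀ k, 0 < k → k < m → w k ≠ w 0 := fun k hk hkm hk0 =>
    Nat.find_min hex hkm ⟨hk, hk0⟩
  refine ⟨m, w, isCycleOn_of_walk hfun hw hm hm0 hmin, Nat.dvd_of_mod_eq_zero ?_⟩
  by_contra hne
  refine hmin _ (Nat.pos_of_ne_zero hne) (Nat.mod_lt _ hm) ?_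
  rw [(periodic_of_walk_of_eq_zero hfun hw hm0).map_mod_nat, hwn]

theorem exists_periodic_walk_iff_exists_isCycleOn_dvd (hfun : ∀ v a b, E v a → E v b → a = b)
    {n : ℕ} (hn : 0 < n) :
    (∃ w : ℕ → V, (∀ i, E (w i) (w (i + 1))) ∧ Periodic w n) ↔
      ∃ m v, IsCycleOn E m v ∧ m ∣ n := by
  constructor
  · rintro ⟨w, hw, hper⟩
    exact exists_isCycleOn_dvd_of_periodic_walk hfun hw hn hper
  · rintro ⟨m, v, hv, k, rfl⟩
    exact ⟨fun i => v (i % m), hv.adj_mod, fun i => by simp only [Nat.add_mul_mod_self_left]⟩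

end FunctionalGraph

/-- For `n ≥ 1`, the graph semiring of a graph `E` satisfies `c_n ≈ x³`
iff the graph contains no cycle whose length divides `n`. -/
theorem stmt_13 {V : Type u} (E : V → V → Prop) (hG : IsGraph E)
    (n : ℕ) (hn : 1 ≤ n) :
    satCx3 E n ↔ ¬ ∃ (m : ℕ) (v : ℕ → V), IsCycleOn E m v ∧ m ∣ n := by
  rw [satCx3_iff_not_exists_closed_walk E hn, exists_closed_walk_iff_exists_periodic_walk E hn,
    exists_periodic_walk_iff_exists_isCycleOn_dvd hG.2.1 hn]
end
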